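/- Let R = ((ℓ_1,…,ℓ_d),(u_1,…,u_{d+1})) be a constructible special point data of level d with q nodes, and assume u_1, …, u_{d+1} is listed in increasing lexicographic order. Then for every node label ℓ ∈ {1,…,q} and all indices 1 ≤ j₂ ≤ j₁ ≤ d+1 one has 0 ≤ a^ℓ_{u_{j₁}}(R) − a^ℓ_{u_{j₂}}(R) ≤ 1. -/

import Mathlib

/-!
Induct along the construction, carrying for every label `ℓ` and every pair of tuples `x, y` of
the data the invariant `CountCompatible`: the counts `a^ℓ` differ by at most one, are monotone
for the lexicographic order, and are antitone for `<_ℓ`, strictly where the two orders disagree.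
Appending a coordinate with a label `ℓ' ≠ ℓ` changes no count. Appending one with label `ℓ`
adds one exactly to the tuples that receive a `2`, i.e. to the `<_ℓ`-upper part of the sorted
list, and the `<_ℓ` clauses are what keep the first two clauses true there. The base level is
itself such a step, taken from the empty data of level `0`.
-/

/-- The relation `u <_ℓ u'` on `{1,2}^d`, relative to node labels `lab : Fin d → ℕ`. -/
def ltNode {d : ℕ} (lab : Fin d → ℕ) (ℓ : ℕ) (u u' : Fin d → ℕ) : Prop :=
  (∃ k₀ : Fin d, lab k₀ = ℓ ∧ u k₀ = 2 ∧ u' k₀ = 1 ∧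
      ∀ k : Fin d, k₀ < k → lab k = ℓ → u k = u' k) ∨
  ((∀ k : Fin d, lab k = ℓ → u k = u' k) ∧
    ∃ k₀ : Fin d, lab k₀ ≠ ℓ ∧ u k₀ = 1 ∧ u' k₀ = 2 ∧
      ∀ k : Fin d, k < k₀ → u k = u' k)

/-- Constructible special point data of level `d` with `q` nodes. -/
inductive Constructible (q : ℕ) :
    (d : ℕ) → (Fin d → ℕ) → (Fin (d + 1) → Fin d → ℕ) → Prop
  | base (ℓ : ℕ) (h1 : 1 ≤ ℓ) (hq : ℓ ≤ q) :
      Constructible q 1 (fun _ => ℓ) ![![1], ![2]]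
  | step {d : ℕ} {lab : Fin d → ℕ} {u : Fin (d + 1) → Fin d → ℕ}
      (hR : Constructible q d lab u) (ℓ : ℕ) (h1 : 1 ≤ ℓ) (hq : ℓ ≤ q)
      (v : Fin (d + 1) → Fin d → ℕ) (σ : Equiv.Perm (Fin (d + 1)))
      (hv : ∀ j, v j = u (σ j))
      (hsort : ∀ i j : Fin (d + 1), i < j → ltNode lab ℓ (v i) (v j))
      (h : ℕ) (hh1 : 1 ≤ h) (hh2 : h ≤ d + 1) :
      Constructible q (d + 1) (Fin.snoc lab ℓ)
        (fun j : Fin (d + 2) =>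
          if hj : (j : ℕ) < h then Fin.snoc (v ⟨(j : ℕ), by omega⟩) 1
          else Fin.snoc (v ⟨(j : ℕ) - 1, by omega⟩) 2)

/-- `a^ℓ_u(R)`: the number of `k` with `ℓ_k = ℓ` and `u(k) = 2`. -/
def aCount {d : ℕ} (lab : Fin d → ℕ) (ℓ : ℕ) (u : Fin d → ℕ) : ℕ :=
  (Finset.univ.filter (fun k : Fin d => lab k = ℓ ∧ u k = 2)).card

/-- `|a_u(R)|`: the number of `k` with `u(k) = 2`. -/
def aTot {d : ℕ} (u : Fin d → ℕ) : ℕ :=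
  (Finset.univ.filter (fun k : Fin d => u k = 2)).card

/-- Lexicographic order on tuples, comparing at the smallest coordinate where they differ. -/
def lexLt {d : ℕ} (u u' : Fin d → ℕ) : Prop :=
  ∃ k₀ : Fin d, (∀ k : Fin d, k < k₀ → u k = u' k) ∧ u k₀ < u' k₀

theorem lexLt_irrefl {d : ℕ} (x : Fin d → ℕ) : ¬ lexLt x x := by
  rintro ⟨k, -, hk⟩
  exact hk.false

theorem ltNode_irrefl {d : ℕ} (lab : Fin d → ℕ) (ℓ : ℕ) (x : Fin d → ℕ) :
    ¬ ltNode lab ℓ x x := by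
  rintro (⟨k, -, h2, h1, -⟩ | ⟨-, k, -, h1, h2, -⟩) <;> omega

theorem aCount_snoc {d : ℕ} (lab : Fin d → ℕ) (ℓ' ℓ : ℕ) (x : Fin d → ℕ) (ε : ℕ) :
    aCount (Fin.snoc lab ℓ' : Fin (d + 1) → ℕ) ℓ (Fin.snoc x ε) =
      aCount lab ℓ x + if ℓ' = ℓ ∧ ε = 2 then 1 else 0 := by
  simp only [aCount, Finset.card_filter, Fin.sum_univ_castSucc, Fin.snoc_castSucc, Fin.snoc_last]

theorem lexLt_snoc_iff {d : ℕ} {x y : Fin d → ℕ} {ε δ : ℕ} :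
    lexLt (Fin.snoc x ε : Fin (d + 1) → ℕ) (Fin.snoc y δ) ↔ lexLt x y ∨ x = y ∧ ε < δ := by
  simp [lexLt, Fin.exists_fin_succ', Fin.forall_fin_succ', funext_iff, (Fin.le_last _).not_gt]

theorem ltNode_snoc_iff {d : ℕ} {lab : Fin d → ℕ} {ℓ' ℓ : ℕ} {x y : Fin d → ℕ} {ε δ : ℕ} :
    ltNode (Fin.snoc lab ℓ' : Fin (d + 1) → ℕ) ℓ (Fin.snoc x ε) (Fin.snoc y δ) ↔
      ltNode lab ℓ x y ∧ (ℓ' = ℓ → ε = δ) ∨ ℓ' = ℓ ∧ ε = 2 ∧ δ = 1 ∨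
        x = y ∧ ℓ' ≠ ℓ ∧ ε = 1 ∧ δ = 2 := by
  simp only [ltNode, Fin.exists_fin_succ', Fin.forall_fin_succ', Fin.snoc_castSucc, Fin.snoc_last,
    Fin.castSucc_lt_castSucc_iff, Fin.castSucc_lt_last, (Fin.le_last _).not_gt, funext_iff,
    false_imp_iff, true_imp_iff]
  aesop

structure CountCompatible {d : ℕ} (lab : Fin d → ℕ) (ℓ : ℕ) (x y : Fin d → ℕ) : Prop where
  le_add_one : aCount lab ℓ x ≤ aCount lab ℓ y + 1
  le_of_lexLt : lexLt x y → aCount lab ℓ x ≤ aCount lab ℓ y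
  le_of_ltNode : ltNode lab ℓ x y → aCount lab ℓ y ≤ aCount lab ℓ x
  lt_of_ltNode_of_lexLt : ltNode lab ℓ x y → lexLt y x → aCount lab ℓ y < aCount lab ℓ x

namespace CountCompatible

variable {d : ℕ} {lab : Fin d → ℕ} {ℓ : ℕ} {x y : Fin d → ℕ}

theorem of_fin_zero (lab : Fin 0 → ℕ) (ℓ : ℕ) (x y : Fin 0 → ℕ) : CountCompatible lab ℓ x y where
  le_add_one := by simp [aCount]
  le_of_lexLt := fun ⟨k, _⟩ => k.elim0
  le_of_ltNode := fun h => by rcases h with ⟨k, _⟩ | ⟨_, k, _⟩ <;> exact k.elim0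
  lt_of_ltNode_of_lexLt := fun _ ⟨k, _⟩ => k.elim0

theorem snoc_of_ne (hxy : CountCompatible lab ℓ x y) {ℓ' : ℕ} (hℓ' : ℓ' ≠ ℓ) (ε δ : ℕ) :
    CountCompatible (Fin.snoc lab ℓ') ℓ (Fin.snoc x ε) (Fin.snoc y δ) := by
  constructor <;>
    simp only [ltNode_snoc_iff, lexLt_snoc_iff, aCount_snoc, hℓ', false_and, if_false, add_zero,
      false_imp_iff, and_true, ne_eq, not_false_eq_true, true_and, false_or]
  · exact hxy.le_add_one
  · rintro (hlt | ⟨rfl, -⟩)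
    exacts [hxy.le_of_lexLt hlt, le_rfl]
  · rintro (hlt | ⟨rfl, -⟩)
    exacts [hxy.le_of_ltNode hlt, le_rfl]
  · rintro (hlt | ⟨rfl, hε, hδ⟩) (hyx | ⟨hyx, hδε⟩)
    · exact hxy.lt_of_ltNode_of_lexLt hlt hyx
    · exact (ltNode_irrefl _ _ _ (hyx ▸ hlt)).elim
    · exact (lexLt_irrefl _ hyx).elim
    · omega

theorem snoc_self (hxy : CountCompatible lab ℓ x y) (hyx : CountCompatible lab ℓ y x)
    {ε δ : ℕ} (hδ : δ = 1 ∨ δ = 2) (hsplit : ε = 2 → δ = 1 → x = y ∨ ltNode lab ℓ y x) :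
    CountCompatible (Fin.snoc lab ℓ) ℓ (Fin.snoc x ε) (Fin.snoc y δ) := by
  have h21 : ε = 2 → δ = 1 →
      aCount lab ℓ x ≤ aCount lab ℓ y ∧ (lexLt x y → aCount lab ℓ x < aCount lab ℓ y) := by
    intro hε hδ
    rcases hsplit hε hδ with rfl | hyx'
    · exact ⟨le_rfl, fun h => (lexLt_irrefl _ h).elim⟩
    · exact ⟨hyx.le_of_ltNode hyx', hyx.lt_of_ltNode_of_lexLt hyx'⟩
  constructor <;>
    simp only [ltNode_snoc_iff, lexLt_snoc_iff, aCount_snoc, true_and, true_imp_iff, ne_eq,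
      not_true_eq_false, false_and, and_false, or_false]
  · have := hxy.le_add_one
    grind
  · rintro (hlt | ⟨rfl, hεδ⟩)
    · have := hxy.le_of_lexLt hlt
      grind
    · split_ifs <;> omega
  · rintro (⟨hlt, rfl⟩ | ⟨rfl, rfl⟩)
    · have := hxy.le_of_ltNode hlt
      split_ifs <;> omega
    · have := hyx.le_add_one
      split_ifs <;> omega
  · rintro (⟨hlt, rfl⟩ | ⟨rfl, rfl⟩) (hyx' | ⟨rfl, hδε⟩)
    · have := hxy.lt_of_ltNode_of_lexLt hlt hyx'
      split_ifs <;> omega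
    · exact (ltNode_irrefl _ _ _ hlt).elim
    · have := hyx.le_of_lexLt hyx'
      split_ifs <;> omega
    · simp

theorem snoc (hxy : CountCompatible lab ℓ x y) (hyx : CountCompatible lab ℓ y x)
    {ℓ' ε δ : ℕ} (hδ : δ = 1 ∨ δ = 2) (hsplit : ε = 2 → δ = 1 → x = y ∨ ltNode lab ℓ' y x) :
    CountCompatible (Fin.snoc lab ℓ') ℓ (Fin.snoc x ε) (Fin.snoc y δ) := by
  obtain rfl | hℓ' := eq_or_ne ℓ' ℓ
  exacts [hxy.snoc_self hyx hδ hsplit, hxy.snoc_of_ne hℓ' ε δ]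

end CountCompatible

theorem Constructible.countCompatible {q d : ℕ} {lab : Fin d → ℕ} {u : Fin (d + 1) → Fin d → ℕ}
    (hR : Constructible q d lab u) (ℓ : ℕ) (i j : Fin (d + 1)) :
    CountCompatible lab ℓ (u i) (u j) := by
  induction hR with
  | base ℓ₀ =>
    have hlab : (fun _ : Fin 1 => ℓ₀) = Fin.snoc (Fin.elim0 : Fin 0 → ℕ) ℓ₀ := by
      ext k; fin_cases k; rfl
    have hu : ∀ k : Fin 2,
        (![![1], ![2]] : Fin 2 → Fin 1 → ℕ) k = Fin.snoc (Fin.elim0 : Fin 0 → ℕ) ((k : ℕ) + 1) := by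
      intro k; fin_cases k <;> ext m <;> fin_cases m <;> rfl
    rw [hlab, hu, hu]
    exact (CountCompatible.of_fin_zero _ _ _ _).snoc (CountCompatible.of_fin_zero _ _ _ _)
      (by omega) fun _ _ => Or.inl (Subsingleton.elim _ _)
  | step _ ℓ' _ _ v _ hv hsort h _ _ ih =>
    have ihv : ∀ p r, CountCompatible _ ℓ (v p) (v r) := fun p r => by
      rw [hv, hv]; exact ih _ _
    dsimp only
    split_ifs with hi hj hj
    all_goals refine (ihv _ _).snoc (ihv _ _) (by norm_num) ?_
    · norm_num
    · norm_num
    · -- here `j < h ≤ i`, so `v j` comes weakly before `v (i - 1)` in the `<_ℓ'`-sorted list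
      intro _ _
      rcases Nat.lt_or_ge (j : ℕ) ((i : ℕ) - 1) with hlt | hge
      · exact Or.inr (hsort _ _ (Fin.mk_lt_mk.mpr hlt))
      · exact Or.inl (congrArg v (Fin.mk_eq_mk.mpr (by omega)))
    · norm_num

theorem constructible_aCount_diff_general {q d : ℕ}
    {lab : Fin d → ℕ} {u : Fin (d + 1) → Fin d → ℕ}
    (hR : Constructible q d lab u)
    (hlex : ∀ i j : Fin (d + 1), i < j → lexLt (u i) (u j))
    (ℓ : ℕ) :
    ∀ j₁ j₂ : Fin (d + 1), j₂ ≤ j₁ →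
      0 ≤ (aCount lab ℓ (u j₁) : ℤ) - (aCount lab ℓ (u j₂) : ℤ) ∧
      (aCount lab ℓ (u j₁) : ℤ) - (aCount lab ℓ (u j₂) : ℤ) ≤ 1 := by
  intro j₁ j₂ hle
  have hmono : aCount lab ℓ (u j₂) ≤ aCount lab ℓ (u j₁) := by
    rcases hle.eq_or_lt with rfl | hlt
    exacts [le_rfl, (hR.countCompatible ℓ j₂ j₁).le_of_lexLt (hlex _ _ hlt)]
  have hstep := (hR.countCompatible ℓ j₁ j₂).le_add_one
  omega

/-- If the tuples of a constructible special point data are listed in increasing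
lexicographic order, then `0 ≤ a^ℓ_{u_{j₁}}(R) − a^ℓ_{u_{j₂}}(R) ≤ 1` whenever
`j₂ ≤ j₁`. -/
theorem constructible_aCount_diff {q d : ℕ} (hq : 1 ≤ q) (hd : 1 ≤ d)
    {lab : Fin d → ℕ} {u : Fin (d + 1) → Fin d → ℕ}
    (hR : Constructible q d lab u)
    (hlex : ∀ i j : Fin (d + 1), i < j → lexLt (u i) (u j))
    (ℓ : ℕ) (hℓ1 : 1 ≤ ℓ) (hℓq : ℓ ≤ q) :
    ∀ j₁ j₂ : Fin (d + 1), j₂ ≤ j₁ →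
      0 ≤ (aCount lab ℓ (u j₁) : ℤ) - (aCount lab ℓ (u j₂) : ℤ) ∧
      (aCount lab ℓ (u j₁) : ℤ) - (aCount lab ℓ (u j₂) : ℤ) ≤ 1 :=
  constructible_aCount_diff_general hR hlex ℓ
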